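/- Let H be a Hopf algebra over ℂ with counit ε, let B be a ℂ-algebra, let K ∈ B⊗H, and let J, X ∈ H⊗H be invertible elements with (id⊗ε)(J) = 1 and (id⊗ε)(X) = 1. Assume the axiom (K3): (id_B⊗Δ)(K) = J₂₃⁻¹·K₁₃·X₂₃·K₁₂ in B⊗H⊗H. Then K = (((id_B⊗ε)(K))⊗1_H)·K in B⊗H; consequently e := (id_B⊗ε)(K) ∈ B is an idempotent (e² = e), and if K is invertible in B⊗H then e = 1. -/

import Mathlib

open scoped TensorProduct

noncomputable section

section Maps
variable (B H : Type*) [Ring B] [Algebra ℂ B] [Ring H] [HopfAlgebra ℂ H]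

/-- The insertion `K ↦ K₁₂` of `B⊗H` into `B⊗H⊗H`. -/
def K12m : (B ⊗[ℂ] H) →ₐ[ℂ] B ⊗[ℂ] (H ⊗[ℂ] H) :=
  Algebra.TensorProduct.map (AlgHom.id ℂ B) Algebra.TensorProduct.includeLeft

/-- The insertion `K ↦ K₁₃` of `B⊗H` into `B⊗H⊗H`. -/
def K13m : (B ⊗[ℂ] H) →ₐ[ℂ] B ⊗[ℂ] (H ⊗[ℂ] H) :=
  Algebra.TensorProduct.map (AlgHom.id ℂ B) Algebra.TensorProduct.includeRight

/-- The insertion `X ↦ X₂₃` of `H⊗H` into `B⊗H⊗H`. -/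
def i23 : (H ⊗[ℂ] H) →ₐ[ℂ] B ⊗[ℂ] (H ⊗[ℂ] H) := Algebra.TensorProduct.includeRight

/-- `id_B ⊗ Δ : B⊗H → B⊗(H⊗H)`. -/
def comulB : (B ⊗[ℂ] H) →ₐ[ℂ] B ⊗[ℂ] (H ⊗[ℂ] H) :=
  Algebra.TensorProduct.map (AlgHom.id ℂ B) (Bialgebra.comulAlgHom ℂ H)

/-- `(id_B ⊗ ε)(K)`, as an element of `B`. -/
def idepsB : (B ⊗[ℂ] H) →ₐ[ℂ] B :=
  (Algebra.TensorProduct.rid ℂ ℂ B).toAlgHom.comp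
    (Algebra.TensorProduct.map (AlgHom.id ℂ B) (Bialgebra.counitAlgHom ℂ H))

/-- `(id_H ⊗ ε)(X)`, as an element of `H`. -/
def idepsH : (H ⊗[ℂ] H) →ₐ[ℂ] H :=
  (Algebra.TensorProduct.rid ℂ ℂ H).toAlgHom.comp
    (Algebra.TensorProduct.map (AlgHom.id ℂ H) (Bialgebra.counitAlgHom ℂ H))

end Maps

/-! Apply the slice map `id_B ⊗ id_H ⊗ ε` to (K3). By the counit axiom `(id⊗ε)Δ = id` the left
side becomes `K`; on the right `K₁₂ ↦ K`, `K₁₃ ↦ e ⊗ 1`, and `J₂₃⁻¹, X₂₃ ↦ 1` by the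
normalisations of `J` and `X`. Hence `K = (e ⊗ 1) K`; applying `id_B ⊗ ε` gives `e = e²`, and
cancelling an invertible `K` gives `e ⊗ 1 = 1`, so `e = 1`. -/

open Algebra.TensorProduct

section CounitSlice
variable (B H : Type*) [Ring B] [Algebra ℂ B] [Ring H] [HopfAlgebra ℂ H]

def idepsBH : (B ⊗[ℂ] (H ⊗[ℂ] H)) →ₐ[ℂ] B ⊗[ℂ] H :=
  map (AlgHom.id ℂ B) (idepsH H)

theorem idepsH_comp_comulAlgHom :
    (idepsH H).comp (Bialgebra.comulAlgHom ℂ H) = AlgHom.id ℂ H := by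
  ext a
  change TensorProduct.rid ℂ H (Coalgebra.counit.lTensor H (Coalgebra.comul a)) = a
  rw [Coalgebra.lTensor_counit_comul, TensorProduct.rid_tmul, one_smul]

theorem idepsH_comp_includeLeft : (idepsH H).comp includeLeft = AlgHom.id ℂ H := by
  ext a
  simp [idepsH]

theorem idepsB_includeLeft (b : B) : idepsB B H (includeLeft (S := ℂ) b) = b := by
  simp [idepsB]

@[simp]
theorem idepsBH_comulB (K : B ⊗[ℂ] H) : idepsBH B H (comulB B H K) = K := by
  rw [← AlgHom.comp_apply, idepsBH, comulB, ← map_comp, idepsH_comp_comulAlgHom,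
    AlgHom.comp_id, map_id, AlgHom.id_apply]

@[simp]
theorem idepsBH_K12m (K : B ⊗[ℂ] H) : idepsBH B H (K12m B H K) = K := by
  rw [← AlgHom.comp_apply, idepsBH, K12m, ← map_comp, idepsH_comp_includeLeft,
    AlgHom.comp_id, map_id, AlgHom.id_apply]

@[simp]
theorem idepsBH_K13m (K : B ⊗[ℂ] H) :
    idepsBH B H (K13m B H K) = includeLeft (S := ℂ) (idepsB B H K) := by
  induction K using TensorProduct.induction_on with
  | zero => simp
  | tmul b h => simp [idepsBH, K13m, idepsB, idepsH]
  | add K K' hK hK' => simp only [map_add, hK, hK']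

@[simp]
theorem idepsBH_i23 (Y : H ⊗[ℂ] H) : idepsBH B H (i23 B H Y) = includeRight (idepsH H Y) :=
  rfl

end CounitSlice

theorem statement3_general (B H : Type*) [Ring B] [Algebra ℂ B] [Ring H] [HopfAlgebra ℂ H]
    (K : B ⊗[ℂ] H) (J X Jinv : H ⊗[ℂ] H)
    (hJ : J * Jinv = 1)
    (hJeps : idepsH H J = 1) (hXeps : idepsH H X = 1)
    (hK3 : comulB B H K = i23 B H Jinv * K13m B H K * i23 B H X * K12m B H K) :
    K = (Algebra.TensorProduct.includeLeft : B →ₐ[ℂ] B ⊗[ℂ] H) (idepsB B H K) * K ∧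
    idepsB B H K * idepsB B H K = idepsB B H K ∧
    (IsUnit K → idepsB B H K = 1) := by
  have hJinv : idepsH H Jinv = 1 := by simpa [hJeps] using congrArg (idepsH H) hJ
  have hK : K = includeLeft (S := ℂ) (idepsB B H K) * K := by
    simpa [hJinv, hXeps] using congrArg (idepsBH B H) hK3
  refine ⟨hK, ?_, fun hKunit => ?_⟩
  · simpa only [map_mul, idepsB_includeLeft] using congrArg (idepsB B H) hK.symm
  · have he : includeLeft (S := ℂ) (idepsB B H K) = (1 : B ⊗[ℂ] H) :=
      hKunit.mul_eq_right.mp hK.symm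
    simpa only [idepsB_includeLeft, map_one] using congrArg (idepsB B H) he

/-- Let `H` be a Hopf algebra over ℂ with counit `ε`, `B` a ℂ-algebra,
`K ∈ B⊗H`, and `J, X ∈ H⊗H` invertible with `(id⊗ε)(J) = 1` and `(id⊗ε)(X) = 1`.
If `(id_B⊗Δ)(K) = J₂₃⁻¹ K₁₃ X₂₃ K₁₂`, then `K = ((id_B⊗ε)(K) ⊗ 1_H)·K`; consequently
`e := (id_B⊗ε)(K)` is an idempotent, and if `K` is invertible then `e = 1`. -/
theorem statement3 (B H : Type*) [Ring B] [Algebra ℂ B] [Ring H] [HopfAlgebra ℂ H]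
    (K : B ⊗[ℂ] H) (J X Jinv Xinv : H ⊗[ℂ] H)
    (hJ : J * Jinv = 1) (hJ' : Jinv * J = 1)
    (hX : X * Xinv = 1) (hX' : Xinv * X = 1)
    (hJeps : idepsH H J = 1) (hXeps : idepsH H X = 1)
    (hK3 : comulB B H K = i23 B H Jinv * K13m B H K * i23 B H X * K12m B H K) :
    K = (Algebra.TensorProduct.includeLeft : B →ₐ[ℂ] B ⊗[ℂ] H) (idepsB B H K) * K ∧
    idepsB B H K * idepsB B H K = idepsB B H K ∧
    (IsUnit K → idepsB B H K = 1) :=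
  statement3_general B H K J X Jinv hJ hJeps hXeps hK3
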